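/- Let ε > 0 and let (F_j) be a normalized block family with sup_j #F_j < ∞. Then there exist a strictly increasing sequence (n_j) of natural numbers and a decreasing sequence (ε_j) of positive reals such that: (i) for every j ∈ ℕ, every segment S of ⪯ with min S ≤ M(F_{n_j}) and every f ∈ G₁ with supp f = S, there exists at most one j' > j such that |f(x)| ≥ ε_j for some x ∈ F_{n_{j'}}; and (ii) Σ_{j=1}^∞ r(F_{n_j}) Σ_{i=j}^∞ (i+1) ε_i < ε. -/

import Mathlib

/-- A tree order on ℕ: a partial order compatible with the usual order, in which every
node has a finite, totally ordered set of predecessors. -/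
structure TreeOrder where
  le : ℕ → ℕ → Prop
  le_refl : ∀ n, le n n
  le_antisymm : ∀ {m n}, le m n → le n m → m = n
  le_trans : ∀ {a b c}, le a b → le b c → le a c
  compat : ∀ {m n}, le m n → m ≤ n
  pred_finite : ∀ n, {m | le m n}.Finite
  pred_chain : ∀ n, ∀ a, le a n → ∀ b, le b n → le a b ∨ le b a

/-- The tree is well-founded: there is no infinite ⪯-chain. -/
def TreeOrder.IsWellFoundedTree (T : TreeOrder) : Prop :=
  ¬ ∃ c : ℕ → ℕ, StrictMono c ∧ ∀ i, T.le (c i) (c (i + 1))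

/-- `s` is an immediate successor of `t`. -/
def TreeOrder.ImmSucc (T : TreeOrder) (t s : ℕ) : Prop :=
  T.le t s ∧ t ≠ s ∧ ∀ u, T.le t u → T.le u s → u = t ∨ u = s

/-- The tree is infinite branching: every non-maximal node has infinitely many
immediate successors. -/
def TreeOrder.InfiniteBranching (T : TreeOrder) : Prop :=
  ∀ t, (∃ s, T.le t s ∧ t ≠ s) → {s | T.ImmSucc t s}.Infinite

/-- Two nodes are incomparable. -/
def TreeOrder.Incomp (T : TreeOrder) (s t : ℕ) : Prop :=
  ¬ T.le s t ∧ ¬ T.le t s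

/-- The measure of a set `A` under a (finitely supported, positive) density `μ : ℕ → ℝ`. -/
noncomputable def mset (μ : ℕ → ℝ) (A : Set ℕ) : ℝ :=
  ∑' t, A.indicator μ t

/-- A segment of the tree order: a totally ordered, convex subset. -/
def TreeOrder.Segment (T : TreeOrder) (S : Set ℕ) : Prop :=
  (∀ s ∈ S, ∀ u ∈ S, T.le s u ∨ T.le u s) ∧
  (∀ s ∈ S, ∀ u ∈ S, ∀ t, T.le s t → T.le t u → t ∈ S)

/-- The set `G₁`: functionals `Σ_{i∈S} ε_i e*_i` with `S` a segment and `ε_i ∈ {-1, 1}`. -/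
def G1 (T : TreeOrder) : Set (ℕ → ℝ) :=
  {f | ∃ S : Set ℕ, T.Segment S ∧ (∀ i ∈ S, f i = 1 ∨ f i = -1) ∧ ∀ i ∉ S, f i = 0}

/-- The set `G_{1,p}`: functionals `Σ_{k=1}^m b_k f_k` with `f_k ∈ G₁` having pairwise
disjoint supports and `Σ_k |b_k|^q ≤ 1` (`q` the conjugate exponent of `p`). -/
def G1p (T : TreeOrder) (q : ℝ) : Set (ℕ → ℝ) :=
  {f | ∃ (m : ℕ) (b : Fin m → ℝ) (g : Fin m → ℕ → ℝ),
    (∀ k, g k ∈ G1 T) ∧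
    (∀ k l : Fin m, k ≠ l →
      Disjoint (Function.support (g k)) (Function.support (g l))) ∧
    (∑ k, |b k| ^ q) ≤ 1 ∧
    f = fun n => ∑ k, b k * g k n}

/-- The action `f(x) = Σ_n f n * x n` of a functional on a vector. -/
noncomputable def evalF (f x : ℕ → ℝ) : ℝ := ∑' n, f n * x n

/-- The norm `‖x‖ = sup {f(x) : f ∈ G_{1,p}}` of the space `JT^ξ_{1,p}`. -/
noncomputable def jtNorm (T : TreeOrder) (q : ℝ) (x : ℕ → ℝ) : ℝ :=
  sSup {r : ℝ | ∃ f ∈ G1p T q, r = evalF f x}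

/-- A normalized block family: a sequence of finite nonempty sets of finitely supported
normalized vectors, with the supports of members of `F j` entirely before those of the
members of `F (j+1)`. -/
def NormalizedBlockFamily (T : TreeOrder) (q : ℝ) (F : ℕ → Finset (ℕ → ℝ)) : Prop :=
  (∀ j, (F j).Nonempty) ∧
  (∀ j, ∀ x ∈ F j, (Function.support x).Finite) ∧
  (∀ j, ∀ x ∈ F j, jtNorm T q x = 1) ∧
  (∀ j, ∀ x ∈ F j, ∀ y ∈ F (j + 1),
    ∀ a ∈ Function.support x, ∀ b ∈ Function.support y, a < b)

/-- `M(F_j)`: the maximum of the supports of the members of `F j`. -/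
noncomputable def famMax (F : ℕ → Finset (ℕ → ℝ)) (j : ℕ) : ℕ :=
  sSup {n : ℕ | ∃ x ∈ F j, n ∈ Function.support x}

/-- `r(F_j)`: the number of integers in the interval `(M(F_{j-1}), M(F_j)]`
(with the convention that the maximum preceding the first set is `0`). -/
noncomputable def famR (F : ℕ → Finset (ℕ → ℝ)) : ℕ → ℕ
  | 0 => (Finset.Ioc 0 (famMax F 0)).card
  | (j + 1) => (Finset.Ioc (famMax F j) (famMax F (j + 1))).card

/-!
Call blocks `F_k` and `F_l` `δ`-linked if some `f ∈ G₁` is `δ`-large on both. No infinite family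
of blocks is pairwise `δ`-linked. Otherwise, for `k < l` cut the linking functional down to its
part above the first node `c` it shares with the support of `F_l`; it stays `δ`-large on `F_l`
and passes through a node `a ⪯ c` of the support of `F_k`. Along an ultrafilter `a` can be made to
depend on `k` only, and since the tree is well founded these nodes contain an infinite antichain.
Many indices `k` from that antichain then give functionals with pairwise incomparable roots, hence
disjoint supports, all `δ`-large on one vector of one block `F_l`; testing that vector against
`m^{-1/q} Σ ±g_k ∈ G_{1,p}` shows there are at most `#F_l ⋅ δ^{-p}` of them.

By Ramsey's theorem every infinite set of blocks therefore contains an infinite pairwise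
non-linked one, and a diagonal construction with the thresholds
`ε_j = ε 2^{-j} / (8 (j+1) (Φ(n_j)+1))`, `Φ(m) = Σ_{k ≤ m} r(F_k)`, keeps the series of (ii)
below `ε / 2`.
-/

open Function Filter

namespace TreeOrder

variable {T : TreeOrder}

theorem Segment.le_of_le {S : Set ℕ} (hS : T.Segment S) {m n : ℕ} (hm : m ∈ S) (hn : n ∈ S)
    (h : m ≤ n) : T.le m n :=
  (hS.1 m hm n hn).elim id fun h' => Nat.le_antisymm h (T.compat h') ▸ T.le_refl m

theorem Segment.inter_above {S : Set ℕ} (hS : T.Segment S) (c : ℕ) :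
    T.Segment (S ∩ {n | T.le c n}) :=
  ⟨fun s hs u hu => hS.1 s hs.1 u hu.1,
    fun s hs u hu t hst htu => ⟨hS.2 s hs.1 u hu.1 t hst htu, T.le_trans hs.2 hst⟩⟩

theorem disjoint_of_incomp {c c' : ℕ} (h : T.Incomp c c') {A B : Set ℕ}
    (hA : ∀ n ∈ A, T.le c n) (hB : ∀ n ∈ B, T.le c' n) : Disjoint A B :=
  Set.disjoint_left.2 fun n hnA hnB =>
    (T.pred_chain n c (hA n hnA) c' (hB n hnB)).elim h.1 h.2

theorem not_incomp_of_le {a a' c c' : ℕ} (ha : T.le a c) (ha' : T.le a' c')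
    (h : ¬ T.Incomp c c') : ¬ T.Incomp a a' := by
  intro hinc
  rcases not_and_or.1 h with h | h <;> rw [not_not] at h
  · exact (T.pred_chain c' a (T.le_trans ha h) a' ha').elim hinc.1 hinc.2
  · exact (T.pred_chain c a ha a' (T.le_trans ha' h)).elim hinc.1 hinc.2

theorem exists_subseq_incomp (hwf : T.IsWellFoundedTree)
    {w : ℕ → ℕ} (hw : StrictMono w) :
    ∃ φ : ℕ → ℕ, StrictMono φ ∧ ∀ i j, i < j → T.Incomp (w (φ i)) (w (φ j)) := by
  have : IsTrans ℕ T.le := ⟨fun _ _ _ => T.le_trans⟩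
  obtain ⟨g, hchain | hfree⟩ := exists_increasing_or_nonincreasing_subseq T.le w
  · exact (hwf ⟨w ∘ g, hw.comp g.strictMono,
      fun i => hchain i (i + 1) (Nat.lt_succ_self i)⟩).elim
  · exact ⟨g, g.strictMono, fun i j hij =>
      ⟨hfree i j hij, fun h => (T.compat h).not_gt (hw (g.strictMono hij))⟩⟩

end TreeOrder

theorem exists_segment_support_subset {T : TreeOrder} {f : ℕ → ℝ} (hf : f ∈ G1 T) :
    ∃ S, T.Segment S ∧ support f ⊆ S := by
  obtain ⟨S, hS, -, hzero⟩ := hf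
  exact ⟨S, hS, fun n hn => by_contra fun h => hn (hzero n h)⟩

open scoped Classical in
theorem restrict_above_mem_G1 {T : TreeOrder} {f : ℕ → ℝ} (hf : f ∈ G1 T) (c : ℕ) :
    (fun n => if T.le c n then f n else 0) ∈ G1 T := by
  obtain ⟨S, hS, hval, hzero⟩ := hf
  refine ⟨S ∩ {n | T.le c n}, hS.inter_above c, fun n hn => ?_, fun n hn => ?_⟩
  · have hc : T.le c n := hn.2
    simpa only [if_pos hc] using hval n hn.1
  · by_cases hc : T.le c n
    · simpa only [if_pos hc] using hzero n fun hS => hn ⟨hS, hc⟩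
    · exact if_neg hc

theorem exists_ne_zero_of_evalF_ne_zero {f y : ℕ → ℝ} (h : evalF f y ≠ 0) :
    ∃ n, f n ≠ 0 ∧ y n ≠ 0 := by
  by_contra! hzero
  refine h ((tsum_congr fun n => ?_).trans tsum_zero)
  by_cases hf : f n = 0
  · rw [hf, zero_mul]
  · rw [hzero n hf, mul_zero]

theorem exists_G1_above_of_evalF_ne_zero {T : TreeOrder} {f y : ℕ → ℝ} (hf : f ∈ G1 T)
    (h : evalF f y ≠ 0) :
    ∃ c, f c ≠ 0 ∧ y c ≠ 0 ∧
      ∃ g ∈ G1 T, evalF g y = evalF f y ∧ ∀ n ∈ support g, T.le c n := by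
  classical
  obtain ⟨S, hS, hsupp⟩ := exists_segment_support_subset hf
  set c := sInf {n | f n ≠ 0 ∧ y n ≠ 0}
  have hc : f c ≠ 0 ∧ y c ≠ 0 := Nat.sInf_mem (exists_ne_zero_of_evalF_ne_zero h)
  refine ⟨c, hc.1, hc.2, _, restrict_above_mem_G1 hf c, tsum_congr fun n => ?_,
    fun n hn => by_contra fun hcn => hn (if_neg hcn)⟩
  -- `c` is the least common point of the supports, and `supp f` is a chain
  dsimp only
  split_ifs with hcn
  · rfl
  by_cases hfn : f n = 0
  · simp [hfn]
  by_cases hyn : y n = 0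
  · simp [hyn]
  exact absurd (hS.le_of_le (hsupp hc.1) (hsupp hfn) (Nat.sInf_le ⟨hfn, hyn⟩)) hcn

theorem evalF_le_one_of_mem_G1p {T : TreeOrder} {q : ℝ} {f y : ℕ → ℝ} (hy : jtNorm T q y = 1)
    (hf : f ∈ G1p T q) : evalF f y ≤ 1 := by
  have hbdd : BddAbove {r : ℝ | ∃ f ∈ G1p T q, r = evalF f y} := by
    by_contra h
    rw [jtNorm, Real.sSup_of_not_bddAbove h] at hy
    exact zero_ne_one hy
  exact hy ▸ le_csSup hbdd ⟨f, hf, rfl⟩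

theorem support_nonempty_of_jtNorm_eq_one {T : TreeOrder} {q : ℝ} {y : ℕ → ℝ}
    (hy : jtNorm T q y = 1) : (support y).Nonempty := by
  by_contra h
  have hy0 : y = 0 := support_eq_empty_iff.1 (Set.not_nonempty_iff_eq_empty.1 h)
  have : jtNorm T q y ≤ 0 :=
    Real.sSup_nonpos fun r ⟨f, _, hr⟩ => by simp [hr, evalF, hy0]
  linarith

theorem evalF_finsetSum {y : ℕ → ℝ} (hy : (support y).Finite) {ι : Type*} (s : Finset ι)
    (b : ι → ℝ) (g : ι → ℕ → ℝ) :
    evalF (fun n => ∑ k ∈ s, b k * g k n) y = ∑ k ∈ s, b k * evalF (g k) y := by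
  have hsum : ∀ k ∈ s, Summable fun n => b k * (g k n * y n) := fun k _ =>
    summable_of_hasFiniteSupport (hy.subset fun n hn => by
      simp only [mem_support] at hn ⊢
      exact right_ne_zero_of_mul (right_ne_zero_of_mul hn))
  simp only [evalF, Finset.sum_mul, mul_assoc]
  rw [Summable.tsum_finsetSum hsum]
  simp only [tsum_mul_left]

/-- The functional `m^{-1/q} Σ_k ± g_k` lies in `G_{1,p}` and takes the value at least
`m^{1/p} δ` at `y`. -/
theorem sum_sign_mul_mem_G1p {T : TreeOrder} {q : ℝ} (hq : 0 < q) {m : ℕ} (hm : 0 < m)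
    {g : Fin m → ℕ → ℝ} (hg : ∀ k, g k ∈ G1 T)
    (hdisj : Pairwise (Disjoint on fun k => support (g k))) {σ : Fin m → ℝ}
    (hσ : ∀ k, |σ k| = 1) :
    (fun n => ∑ k, (m : ℝ) ^ (-q⁻¹) * σ k * g k n) ∈ G1p T q := by
  have hm' : (0 : ℝ) < m := Nat.cast_pos.2 hm
  refine ⟨m, fun k => (m : ℝ) ^ (-q⁻¹) * σ k, g, hg, fun k l h => hdisj h, le_of_eq ?_, rfl⟩
  simp only [abs_mul, hσ, mul_one, abs_of_pos (Real.rpow_pos_of_pos hm' _), Finset.sum_const,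
    Finset.card_univ, Fintype.card_fin, nsmul_eq_mul, ← Real.rpow_mul hm'.le, neg_mul,
    inv_mul_cancel₀ hq.ne', Real.rpow_neg_one]
  exact mul_inv_cancel₀ hm'.ne'

theorem card_le_of_pairwise_disjoint_G1 {T : TreeOrder} {p q : ℝ} (hp : 1 < p)
    (hpq : 1 / p + 1 / q = 1) {y : ℕ → ℝ} (hy : jtNorm T q y = 1) (hyf : (support y).Finite)
    {δ : ℝ} (hδ : 0 < δ) {m : ℕ} {g : Fin m → ℕ → ℝ} (hg : ∀ k, g k ∈ G1 T)
    (hdisj : Pairwise (Disjoint on fun k => support (g k)))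
    (hlarge : ∀ k, δ ≤ |evalF (g k) y|) :
    (m : ℝ) ≤ δ⁻¹ ^ p := by
  rcases m.eq_zero_or_pos with rfl | hm
  · simp only [CharP.cast_eq_zero]
    positivity
  have hm' : (0 : ℝ) < m := Nat.cast_pos.2 hm
  rw [one_div, one_div] at hpq
  have hp0 : 0 < p := by linarith
  have hq : 0 < q := inv_pos.1 (by linarith [inv_lt_one_of_one_lt₀ hp])
  set σ : Fin m → ℝ := fun k => if 0 ≤ evalF (g k) y then 1 else -1
  have hσ : ∀ k, |σ k| = 1 := fun k => by simp only [σ]; split_ifs <;> simp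
  have hσv : ∀ k, σ k * evalF (g k) y = |evalF (g k) y| := fun k => by
    simp only [σ]; split_ifs with h
    · rw [one_mul, abs_of_nonneg h]
    · rw [abs_of_neg (not_le.1 h)]; ring
  have hkey : (m : ℝ) ^ p⁻¹ * δ ≤ 1 :=
    calc (m : ℝ) ^ p⁻¹ * δ = (m : ℝ) ^ (-q⁻¹) * ∑ _k : Fin m, δ := by
          rw [Finset.sum_const, Finset.card_univ, Fintype.card_fin, nsmul_eq_mul, ← mul_assoc,
            show p⁻¹ = -q⁻¹ + 1 by linarith, Real.rpow_add_one hm'.ne']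
      _ ≤ (m : ℝ) ^ (-q⁻¹) * ∑ k, σ k * evalF (g k) y := by
          simp only [hσv]
          gcongr with k
          exact hlarge k
      _ = evalF (fun n => ∑ k, (m : ℝ) ^ (-q⁻¹) * σ k * g k n) y := by
          rw [evalF_finsetSum hyf, Finset.mul_sum]
          simp only [mul_assoc]
      _ ≤ 1 := evalF_le_one_of_mem_G1p hy (sum_sign_mul_mem_G1p hq hm hg hdisj hσ)
  calc (m : ℝ) = ((m : ℝ) ^ p⁻¹) ^ p := (Real.rpow_inv_rpow hm'.le hp0.ne').symm
    _ ≤ δ⁻¹ ^ p := by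
        refine Real.rpow_le_rpow (by positivity) ?_ hp0.le
        rwa [← le_div_iff₀ hδ, one_div] at hkey

def blockSupport (F : ℕ → Finset (ℕ → ℝ)) (j : ℕ) : Set ℕ :=
  ⋃ x ∈ F j, support x

theorem mem_blockSupport {F : ℕ → Finset (ℕ → ℝ)} {j n : ℕ} :
    n ∈ blockSupport F j ↔ ∃ x ∈ F j, x n ≠ 0 := by
  simp [blockSupport]

namespace NormalizedBlockFamily

variable {T : TreeOrder} {q : ℝ} {F : ℕ → Finset (ℕ → ℝ)}

theorem blockSupport_finite (hF : NormalizedBlockFamily T q F) (j : ℕ) :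
    (blockSupport F j).Finite :=
  (F j).finite_toSet.biUnion fun x hx => hF.2.1 j x hx

theorem blockSupport_nonempty (hF : NormalizedBlockFamily T q F) (j : ℕ) :
    (blockSupport F j).Nonempty := by
  obtain ⟨x, hx⟩ := hF.1 j
  obtain ⟨n, hn⟩ := support_nonempty_of_jtNorm_eq_one (hF.2.2.1 j x hx)
  exact ⟨n, mem_blockSupport.2 ⟨x, hx, hn⟩⟩

theorem lt_of_mem_blockSupport (hF : NormalizedBlockFamily T q F) {i j : ℕ} (hij : i < j)
    {a b : ℕ} (ha : a ∈ blockSupport F i) (hb : b ∈ blockSupport F j) : a < b := by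
  have hnext : ∀ {k a b}, a ∈ blockSupport F k → b ∈ blockSupport F (k + 1) → a < b := by
    intro k a b ha hb
    obtain ⟨x, hx, hxa⟩ := mem_blockSupport.1 ha
    obtain ⟨y, hy, hyb⟩ := mem_blockSupport.1 hb
    exact hF.2.2.2 k x hx y hy a hxa b hyb
  induction hij generalizing b with
  | refl => exact hnext ha hb
  | step _ ih =>
    obtain ⟨c, hc⟩ := hF.blockSupport_nonempty _
    exact (ih hc).trans (hnext hc hb)

theorem comp_strictMono (hF : NormalizedBlockFamily T q F) {a : ℕ → ℕ} (ha : StrictMono a) :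
    NormalizedBlockFamily T q (F ∘ a) :=
  ⟨fun j => hF.1 (a j), fun j => hF.2.1 (a j), fun j => hF.2.2.1 (a j),
    fun j x hx y hy _ hu _ hv => hF.lt_of_mem_blockSupport (ha (Nat.lt_succ_self j))
      (mem_blockSupport.2 ⟨x, hx, hu⟩) (mem_blockSupport.2 ⟨y, hy, hv⟩)⟩

end NormalizedBlockFamily

theorem exists_strictMono_of_eventually_eventually (U : Ultrafilter ℕ)
    (hU : (U : Filter ℕ) ≤ cofinite) {S : Set ℕ} (hS : S ∈ U) {r : ℕ → ℕ → Prop}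
    (h : ∀ᶠ a in U, ∀ᶠ b in U, r a b) :
    ∃ a : ℕ → ℕ, StrictMono a ∧ (∀ i, a i ∈ S) ∧ ∀ i j, i < j → r (a i) (a j) := by
  let s : ℕ → Set ℕ := fun i =>
    Nat.rec (S ∩ {a | ∀ᶠ b in U, r a b}) (fun _ t => t ∩ Set.Ioi (sInf t) ∩ {b | r (sInf t) b}) i
  have hsucc : ∀ i, s (i + 1) = s i ∩ Set.Ioi (sInf (s i)) ∩ {b | r (sInf (s i)) b} :=
    fun _ => rfl
  have hs : ∀ i, s i ⊆ S ∩ {a | ∀ᶠ b in U, r a b} ∧ s i ∈ U := by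
    intro i
    induction i with
    | zero => exact ⟨subset_rfl, inter_mem hS h⟩
    | succ i ih =>
      have hmin : sInf (s i) ∈ s i := Nat.sInf_mem (U.nonempty_of_mem ih.2)
      rw [hsucc]
      refine ⟨fun b hb => ih.1 hb.1.1, inter_mem (inter_mem ih.2 (hU ?_)) (ih.1 hmin).2⟩
      rw [← Set.compl_Iic]
      exact (Set.finite_Iic _).compl_mem_cofinite
  have hmem : ∀ i, sInf (s i) ∈ s i := fun i => Nat.sInf_mem (U.nonempty_of_mem (hs i).2)
  have hanti : Antitone s :=
    antitone_nat_of_succ_le fun i => by rw [hsucc]; exact fun b hb => hb.1.1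
  refine ⟨fun i => sInf (s i), strictMono_nat_of_lt_succ fun i => ?_,
    fun i => ((hs i).1 (hmem i)).1, fun i j hij => ?_⟩
  · have := hmem (i + 1)
    rw [hsucc] at this
    exact this.1.2
  · have := hanti hij (hmem j)
    rw [hsucc] at this
    exact this.2

/-- Ramsey's theorem for pairs, in the form of a monochromatic subsequence. -/
theorem Set.Infinite.exists_strictMono_forall_or_forall_not {N : Set ℕ} (hN : N.Infinite)
    (r : ℕ → ℕ → Prop) :
    ∃ a : ℕ → ℕ, StrictMono a ∧ (∀ i, a i ∈ N) ∧
      ((∀ i j, i < j → r (a i) (a j)) ∨ ∀ i j, i < j → ¬ r (a i) (a j)) := by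
  have := hN.cofinite_inf_principal_neBot
  let U := Ultrafilter.of (cofinite ⊓ Filter.principal N)
  have hU : ↑U ≤ cofinite ⊓ Filter.principal N := Ultrafilter.of_le _
  have hNU : N ∈ U := hU (mem_inf_of_right (mem_principal_self N))
  rcases Ultrafilter.eventually_or.1 (Eventually.of_forall fun a => U.em (r a)) with h | h <;>
    obtain ⟨a, ha, haN, hr⟩ := exists_strictMono_of_eventually_eventually U
      (hU.trans inf_le_left) hNU h
  exacts [⟨a, ha, haN, Or.inl hr⟩, ⟨a, ha, haN, Or.inr hr⟩]

theorem exists_stable_values_of_finite {α : Type*} (b : ℕ → ℕ → α) (R : ℕ → Set α)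
    (hR : ∀ k, (R k).Finite) (hb : ∀ k l, k < l → b k l ∈ R k) :
    ∃ w : ℕ → α, ∀ s : Finset ℕ, ∃ l, ∀ k ∈ s, k < l ∧ b k l = w k := by
  let U := hyperfilter ℕ
  have hgt : ∀ k, ∀ᶠ l in U, k < l := fun k =>
    hyperfilter_le_cofinite (by rw [Nat.cofinite_eq_atTop]; exact eventually_gt_atTop k)
  have hstable : ∀ k, ∃ x, ∀ᶠ l in U, b k l = x := fun k =>
    let ⟨x, _, hx⟩ := (Ultrafilter.eventually_exists_mem_iff (hR k)).1
      ((hgt k).mono fun l hl => ⟨b k l, hb k l hl, rfl⟩)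
    ⟨x, hx⟩
  choose w hw using hstable
  exact ⟨w, fun s => ((eventually_all_finset s).2 fun k _ => (hgt k).and (hw k)).exists⟩

theorem exists_strictMono_forall_pairwise (R : ℕ → ℕ → ℕ → ℕ → Prop)
    (h : ∀ j m (N : Set ℕ), N.Infinite → ∃ N' ⊆ N, N'.Infinite ∧ N'.Pairwise (R j m)) :
    ∃ n : ℕ → ℕ, StrictMono n ∧
      ∀ j j₁ j₂, j < j₁ → j < j₂ → j₁ ≠ j₂ → R j (n j) (n j₁) (n j₂) := by
  choose N' hsub hinf hpw using h
  let N : ℕ → {N : Set ℕ // N.Infinite} := fun j => Nat.rec ⟨Set.univ, Set.infinite_univ⟩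
    (fun j M => ⟨N' j (sInf M.1) (M.1 \ Set.Iic (sInf M.1)) (M.2.sdiff (Set.finite_Iic _)),
      hinf _ _ _ _⟩) j
  let n : ℕ → ℕ := fun j => sInf (N j).1
  have hsucc : ∀ j, (N (j + 1)).1 ⊆ (N j).1 \ Set.Iic (n j) := fun j => hsub _ _ _ _
  have hmem : ∀ j, n j ∈ (N j).1 := fun j => Nat.sInf_mem (N j).2.nonempty
  have hanti : Antitone fun j => (N j).1 :=
    antitone_nat_of_succ_le fun j => (hsucc j).trans Set.sdiff_subset
  have hn : StrictMono n :=
    strictMono_nat_of_lt_succ fun j => not_le.1 (hsucc j (hmem (j + 1))).2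
  exact ⟨n, hn, fun j j₁ j₂ h₁ h₂ hne => hpw _ _ _ _ (hanti h₁ (hmem j₁)) (hanti h₂ (hmem j₂))
    (hn.injective.ne hne)⟩

def LargeOn (F : ℕ → Finset (ℕ → ℝ)) (δ : ℝ) (f : ℕ → ℝ) (m : ℕ) : Prop :=
  ∃ x ∈ F m, δ ≤ |evalF f x|

def Linked (T : TreeOrder) (F : ℕ → Finset (ℕ → ℝ)) (δ : ℝ) (m m' : ℕ) : Prop :=
  ∃ f ∈ G1 T, LargeOn F δ f m ∧ LargeOn F δ f m'

theorem Linked.symm {T : TreeOrder} {F : ℕ → Finset (ℕ → ℝ)} {δ : ℝ} {m m' : ℕ}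
    (h : Linked T F δ m m') : Linked T F δ m' m :=
  let ⟨f, hf, hm, hm'⟩ := h
  ⟨f, hf, hm', hm⟩

theorem exists_not_incomp_of_card_lt {T : TreeOrder} {p q : ℝ} (hp : 1 < p)
    (hpq : 1 / p + 1 / q = 1) {B : Finset (ℕ → ℝ)}
    (hB : ∀ x ∈ B, jtNorm T q x = 1 ∧ (support x).Finite) {D : ℕ} (hBD : B.card ≤ D)
    {δ : ℝ} (hδ : 0 < δ) {ι : Type*} {s : Finset ι} {y g : ι → ℕ → ℝ} {c : ι → ℕ}
    (hy : ∀ i ∈ s, y i ∈ B) (hg : ∀ i ∈ s, g i ∈ G1 T)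
    (hlarge : ∀ i ∈ s, δ ≤ |evalF (g i) (y i)|)
    (habove : ∀ i ∈ s, ∀ n ∈ support (g i), T.le (c i) n)
    (hcard : D * ⌊δ⁻¹ ^ p⌋₊ < s.card) :
    ∃ i ∈ s, ∃ i' ∈ s, i ≠ i' ∧ ¬ T.Incomp (c i) (c i') := by
  classical
  obtain ⟨y₀, hy₀, hfiber⟩ := Finset.exists_lt_card_fiber_of_mul_lt_card_of_maps_to hy
    ((Nat.mul_le_mul_right _ hBD).trans_lt hcard)
  by_contra! hinc
  set t := s.filter (y · = y₀)
  have ht : ∀ i ∈ t, i ∈ s ∧ y i = y₀ := fun i hi => Finset.mem_filter.1 hi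
  let e := t.equivFin
  have hbound := card_le_of_pairwise_disjoint_G1 hp hpq (hB y₀ hy₀).1 (hB y₀ hy₀).2 hδ
    (g := fun k => g (e.symm k)) (fun k => hg _ (ht _ (e.symm k).2).1)
    (fun k k' hkk => TreeOrder.disjoint_of_incomp
      (hinc _ (ht _ (e.symm k).2).1 _ (ht _ (e.symm k').2).1
        fun h => hkk (e.symm.injective (Subtype.ext h)))
      (habove _ (ht _ (e.symm k).2).1) (habove _ (ht _ (e.symm k').2).1))
    (fun k => (ht _ (e.symm k).2).2 ▸ hlarge _ (ht _ (e.symm k).2).1)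
  exact hfiber.not_ge (Nat.le_floor hbound)

namespace NormalizedBlockFamily

variable {T : TreeOrder} {p q : ℝ} {F : ℕ → Finset (ℕ → ℝ)} {δ : ℝ}

theorem exists_root_of_linked (hF : NormalizedBlockFamily T q F) (hδ : 0 < δ) {k l : ℕ}
    (hkl : k < l) (h : Linked T F δ k l) :
    ∃ a ∈ blockSupport F k, ∃ c, ∃ y ∈ F l, ∃ g ∈ G1 T,
      T.le a c ∧ δ ≤ |evalF g y| ∧ ∀ n ∈ support g, T.le c n := by
  obtain ⟨f, hf, ⟨x, hx, hfx⟩, ⟨y, hy, hfy⟩⟩ := h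
  have hne : ∀ {z}, δ ≤ |evalF f z| → evalF f z ≠ 0 := fun hz h0 => by
    rw [h0, abs_zero] at hz
    linarith
  obtain ⟨a, hfa, hxa⟩ := exists_ne_zero_of_evalF_ne_zero (hne hfx)
  obtain ⟨c, hfc, hyc, g, hg, hgy, habove⟩ := exists_G1_above_of_evalF_ne_zero hf (hne hfy)
  obtain ⟨S, hS, hsupp⟩ := exists_segment_support_subset hf
  have ha : a ∈ blockSupport F k := mem_blockSupport.2 ⟨x, hx, hxa⟩
  have hac : a < c := hF.lt_of_mem_blockSupport hkl ha (mem_blockSupport.2 ⟨y, hy, hyc⟩)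
  exact ⟨a, ha, c, y, hy, g, hg, hS.le_of_le (hsupp hfa) (hsupp hfc) hac.le, hgy ▸ hfy, habove⟩

theorem not_forall_linked (hF : NormalizedBlockFamily T q F) (hwf : T.IsWellFoundedTree)
    (hp : 1 < p) (hpq : 1 / p + 1 / q = 1) {D : ℕ} (hD : ∀ j, (F j).card ≤ D) (hδ : 0 < δ) :
    ¬ ∀ k l, k < l → Linked T F δ k l := by
  intro hbad
  have hroot : ∀ k l, ∃ a c y g, k < l → a ∈ blockSupport F k ∧ y ∈ F l ∧ g ∈ G1 T ∧
      T.le a c ∧ δ ≤ |evalF g y| ∧ ∀ n ∈ support g, T.le c n := by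
    intro k l
    by_cases hkl : k < l
    · obtain ⟨a, ha, c, y, hy, g, hg, hac, hgy, habove⟩ :=
        hF.exists_root_of_linked hδ hkl (hbad k l hkl)
      exact ⟨a, c, y, g, fun _ => ⟨ha, hy, hg, hac, hgy, habove⟩⟩
    · exact ⟨0, 0, 0, 0, fun h => absurd h hkl⟩
  choose a c y g hdata using hroot
  -- along an ultrafilter, the node `a k l` in the support of `F k` stops depending on `l`
  obtain ⟨w, hw⟩ := exists_stable_values_of_finite a (blockSupport F) hF.blockSupport_finite
    fun k l hkl => (hdata k l hkl).1
  have hwmem : ∀ k, w k ∈ blockSupport F k := fun k => by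
    obtain ⟨l, hl⟩ := hw {k}
    obtain ⟨hkl, hakl⟩ := hl k (Finset.mem_singleton_self k)
    exact hakl ▸ (hdata k l hkl).1
  obtain ⟨φ, hφ, hinc⟩ := TreeOrder.exists_subseq_incomp hwf (w := w)
    (strictMono_nat_of_lt_succ fun k =>
      hF.lt_of_mem_blockSupport (Nat.lt_succ_self k) (hwmem k) (hwmem (k + 1)))
  set s := (Finset.range (D * ⌊δ⁻¹ ^ p⌋₊ + 1)).map ⟨φ, hφ.injective⟩
  obtain ⟨l, hl⟩ := hw s
  obtain ⟨_, hi, _, hi', hne, hcomp⟩ := exists_not_incomp_of_card_lt hp hpq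
    (fun x hx => ⟨hF.2.2.1 l x hx, hF.2.1 l x hx⟩) (hD l) hδ (s := s)
    (y := fun k => y k l) (g := fun k => g k l) (c := fun k => c k l)
    (fun k hk => (hdata k l (hl k hk).1).2.1) (fun k hk => (hdata k l (hl k hk).1).2.2.1)
    (fun k hk => (hdata k l (hl k hk).1).2.2.2.2.1)
    (fun k hk => (hdata k l (hl k hk).1).2.2.2.2.2) (by simp [s])
  have hwle : ∀ k ∈ s, T.le (w k) (c k l) := fun k hk =>
    (hl k hk).2 ▸ (hdata k l (hl k hk).1).2.2.2.1
  have hwcomp := TreeOrder.not_incomp_of_le (hwle _ hi) (hwle _ hi') hcomp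
  obtain ⟨m, -, rfl⟩ := Finset.mem_map.1 hi
  obtain ⟨m', -, rfl⟩ := Finset.mem_map.1 hi'
  rcases lt_or_gt_of_ne fun h => hne (congrArg φ h) with h | h
  · exact hwcomp (hinc m m' h)
  · exact hwcomp ⟨(hinc m' m h).2, (hinc m' m h).1⟩

theorem exists_infinite_pairwise_not_linked (hF : NormalizedBlockFamily T q F)
    (hwf : T.IsWellFoundedTree) (hp : 1 < p) (hpq : 1 / p + 1 / q = 1) {D : ℕ}
    (hD : ∀ j, (F j).card ≤ D) (hδ : 0 < δ) {N : Set ℕ} (hN : N.Infinite) :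
    ∃ N' ⊆ N, N'.Infinite ∧ N'.Pairwise fun m m' => ¬ Linked T F δ m m' := by
  obtain ⟨a, ha, haN, hall | hnone⟩ := hN.exists_strictMono_forall_or_forall_not (Linked T F δ)
  · exact ((hF.comp_strictMono ha).not_forall_linked hwf hp hpq (fun j => hD (a j)) hδ
      hall).elim
  refine ⟨Set.range a, Set.range_subset_iff.2 haN, Set.infinite_range_of_injective ha.injective,
    ?_⟩
  rintro _ ⟨i, rfl⟩ _ ⟨j, rfl⟩ hij
  rcases lt_or_gt_of_ne fun h => hij (congrArg a h) with h | h
  · exact hnone i j h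
  · exact fun hpair => hnone j i h hpair.symm

end NormalizedBlockFamily

theorem summable_tail_and_tsum_lt {a : ℕ → ℝ} {r : ℕ → ℕ} {ε : ℝ} (hε : 0 < ε)
    (ha : ∀ i, 0 ≤ a i) (hra : ∀ j i, j ≤ i → ((r j : ℝ) + 1) * a i ≤ ε / 8 * (1 / 2) ^ i) :
    Summable a ∧ Summable (fun j => (r j : ℝ) * ∑' k, a (j + k)) ∧
      ∑' j, (r j : ℝ) * ∑' k, a (j + k) < ε := by
  have hgeo : Summable fun i : ℕ => ((1 : ℝ) / 2) ^ i := summable_geometric_two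
  have hsum : Summable a := .of_nonneg_of_le ha
    (fun i => (le_mul_of_one_le_left (ha i) (by simp)).trans (hra i i le_rfl)) (hgeo.mul_left _)
  have htail : ∀ j, (r j : ℝ) * ∑' k, a (j + k) ≤ ε / 4 * (1 / 2) ^ j := fun j =>
    calc (r j : ℝ) * ∑' k, a (j + k) ≤ ((r j : ℝ) + 1) * ∑' k, a (j + k) := by
          gcongr
          · exact tsum_nonneg fun k => ha _
          · linarith
      _ = ∑' k, ((r j : ℝ) + 1) * a (j + k) := tsum_mul_left.symm
      _ ≤ ∑' k, ε / 8 * (1 / 2) ^ j * (1 / 2) ^ k :=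
          ((hsum.comp_injective (add_right_injective j)).mul_left _).tsum_le_tsum
            (fun k => by rw [mul_assoc, ← pow_add]; exact hra j (j + k) (by omega))
            (hgeo.mul_left _)
      _ = ε / 4 * (1 / 2) ^ j := by rw [tsum_mul_left, tsum_geometric_two]; ring
  have htail_nonneg : ∀ j, 0 ≤ (r j : ℝ) * ∑' k, a (j + k) := fun j =>
    mul_nonneg (Nat.cast_nonneg _) (tsum_nonneg fun k => ha _)
  have hsum' : Summable fun j => (r j : ℝ) * ∑' k, a (j + k) :=
    .of_nonneg_of_le htail_nonneg htail (hgeo.mul_left _)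
  refine ⟨hsum, hsum', ?_⟩
  calc ∑' j, (r j : ℝ) * ∑' k, a (j + k) ≤ ∑' j, ε / 4 * (1 / 2) ^ j :=
        hsum'.tsum_le_tsum htail (hgeo.mul_left _)
    _ = ε / 2 := by rw [tsum_mul_left, tsum_geometric_two]; ring
    _ < ε := by linarith

noncomputable def famRSum (F : ℕ → Finset (ℕ → ℝ)) (m : ℕ) : ℕ :=
  ∑ k ∈ Finset.range (m + 1), famR F k

theorem famR_le_famRSum (F : ℕ → Finset (ℕ → ℝ)) {k m : ℕ} (hkm : k ≤ m) :
    famR F k ≤ famRSum F m :=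
  Finset.single_le_sum (fun _ _ => Nat.zero_le _) (Finset.mem_range.2 (Nat.lt_succ_of_le hkm))

theorem famRSum_mono (F : ℕ → Finset (ℕ → ℝ)) : Monotone (famRSum F) := fun _ _ h =>
  Finset.sum_le_sum_of_subset (Finset.range_subset_range.2 (Nat.succ_le_succ h))

/-- for every `ε > 0` and every normalized block family `(F j)` with
uniformly bounded cardinalities, there exist a strictly increasing sequence `(n j)` of
naturals and a decreasing sequence `(εs j)` of positive reals such that:
(i) for every `j`, every segment `S` with `min S ≤ M(F_{n_j})` and every `f ∈ G₁` with
`supp f = S`, there is at most one `j' > j` such that `|f(x)| ≥ εs j` for some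
`x ∈ F_{n_{j'}}`; and (ii) `Σ_j r(F_{n_j}) Σ_{i=j}^∞ (i+1) εs i < ε` (all the series
involved being convergent). -/
theorem statement12 (T : TreeOrder) (hwf : T.IsWellFoundedTree)
    (p q : ℝ) (hp : 1 < p) (hpq : 1 / p + 1 / q = 1)
    (F : ℕ → Finset (ℕ → ℝ)) (hF : NormalizedBlockFamily T q F)
    (D : ℕ) (hD : ∀ j, (F j).card ≤ D)
    (ε : ℝ) (hε : 0 < ε) :
    ∃ n : ℕ → ℕ, StrictMono n ∧
    ∃ εs : ℕ → ℝ, (∀ j, 0 < εs j) ∧ (∀ j, εs (j + 1) ≤ εs j) ∧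
      (∀ j : ℕ, ∀ S : Set ℕ, T.Segment S → (∃ i ∈ S, i ≤ famMax F (n j)) →
        ∀ f ∈ G1 T, Function.support f = S →
        ∀ j₁ j₂ : ℕ, j < j₁ → j < j₂ →
          (∃ x ∈ F (n j₁), εs j ≤ |evalF f x|) →
          (∃ x ∈ F (n j₂), εs j ≤ |evalF f x|) → j₁ = j₂) ∧
      Summable (fun i : ℕ => ((i : ℝ) + 1) * εs i) ∧
      Summable (fun j : ℕ =>
        (famR F (n j) : ℝ) * ∑' k : ℕ, (((j + k : ℕ) : ℝ) + 1) * εs (j + k)) ∧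
      (∑' j : ℕ,
        (famR F (n j) : ℝ) * ∑' k : ℕ, (((j + k : ℕ) : ℝ) + 1) * εs (j + k)) < ε := by
  let Φ := famRSum F
  let δ : ℕ → ℕ → ℝ := fun j m => ε / 8 * (1 / 2) ^ j / ((j + 1) * (Φ m + 1))
  have hδ : ∀ j m, 0 < δ j m := fun j m => by positivity
  obtain ⟨n, hn, hfree⟩ := exists_strictMono_forall_pairwise
    (fun j m a b => ¬ Linked T F (δ j m) a b)
    fun j m _ hN => hF.exists_infinite_pairwise_not_linked hwf hp hpq hD (hδ j m) hN
  refine ⟨n, hn, fun j => δ j (n j), fun j => hδ j (n j), fun j => ?_,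
    fun j _ _ _ f hf _ j₁ j₂ h₁ h₂ hx₁ hx₂ => by_contra fun hne =>
      hfree j j₁ j₂ h₁ h₂ hne ⟨f, hf, hx₁, hx₂⟩,
    summable_tail_and_tsum_lt hε (fun i => by positivity) fun j i hji => ?_⟩
  · have : (Φ (n j) : ℝ) ≤ Φ (n (j + 1)) := by
      exact_mod_cast famRSum_mono F (hn (lt_add_one j)).le
    refine div_le_div₀ (by positivity) (mul_le_mul_of_nonneg_left
      (pow_le_pow_of_le_one (by norm_num) (by norm_num) (Nat.le_succ j)) (by positivity))
      (by positivity) ?_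
    gcongr
    exact Nat.le_succ j
  · have hr : (famR F (n j) : ℝ) + 1 ≤ Φ (n i) + 1 := by
      exact_mod_cast Nat.succ_le_succ (famR_le_famRSum F (hn.monotone hji))
    calc ((famR F (n j) : ℝ) + 1) * ((i + 1) * δ i (n i))
        ≤ ((Φ (n i) : ℝ) + 1) * ((i + 1) * δ i (n i)) := by gcongr
      _ = ε / 8 * (1 / 2) ^ i := by simp only [δ]; field_simp
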